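/- Let K and L be convex bodies in R^n of the same volume, both in M-position with constant β (i.e., max{N(K̃, rB), N(rB, K̃), N(K̃°, sB), N(sB, K̃°)} ≤ e^{βn} for appropriately normalized balls). Then N(K, tL)^{1/n} ≍ N(L, tK)^{1/n} for every t > 0, up to constants depending only on β. -/

import Mathlib

open MeasureTheory Set
open scoped Pointwise RealInnerProductSpace

/-- Covering number: the least `N` such that `A` is covered by `N` translates of `B`. -/
noncomputable def covN {n : ℕ} (A B : Set (EuclideanSpace ℝ (Fin n))) : ℕ :=
  sInf {N : ℕ | ∃ F : Finset (EuclideanSpace ℝ (Fin n)), F.card = N ∧ A ⊆ ⋃ c ∈ F, c +ᵥ B}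

/-- The polar body `K° = {y : ⟨x,y⟩ ≤ 1 for all x ∈ K}`. -/
def polarBody {n : ℕ} (K : Set (EuclideanSpace ℝ (Fin n))) : Set (EuclideanSpace ℝ (Fin n)) :=
  {y | ∀ x ∈ K, ⟪x, y⟫ ≤ 1}

/-- `K` is in `M`-position with constant `β`: `K` has the volume of the Euclidean unit ball
and the four covering numbers of `K`, `K°` with `B₂ⁿ` are at most `e^{βn}`. -/
noncomputable def MPosition {n : ℕ} (β : ℝ) (K : Set (EuclideanSpace ℝ (Fin n))) : Prop :=
  volume K = volume (Metric.closedBall (0 : EuclideanSpace ℝ (Fin n)) 1) ∧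
  (covN K (Metric.closedBall (0 : EuclideanSpace ℝ (Fin n)) 1) : ℝ) ≤ Real.exp (β * n) ∧
  (covN (Metric.closedBall (0 : EuclideanSpace ℝ (Fin n)) 1) K : ℝ) ≤ Real.exp (β * n) ∧
  (covN (polarBody K) (Metric.closedBall (0 : EuclideanSpace ℝ (Fin n)) 1) : ℝ) ≤
    Real.exp (β * n) ∧
  (covN (Metric.closedBall (0 : EuclideanSpace ℝ (Fin n)) 1) (polarBody K) : ℝ) ≤
    Real.exp (β * n)

/-!
Route both covers through the Euclidean ball `B`: `N(K, tL) ≤ N(K, B) · N(B, tB) · N(B, L)`,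
which in `M`-position is at most `e^{2βn} (1 + 2/t)^n` by the volumetric bound
`N(B, tB) ≤ (1 + 2/t)^n` (a maximal `t`-separated subset of `B` is a `t`-net, and the
disjoint balls of radius `t/2` around its points fit into `(1 + t/2)B`). In the other
direction, comparing volumes of `L` and of the translates of `tK` covering it gives
`N(L, tK) ≥ |L| / |tK| = t^{-n}`, and also `N(L, tK) ≥ 1`, so
`N(L, tK)^{1/n} ≥ max(1, 1/t) ≥ (1 + 2/t)/3`. Hence `N(K, tL)^{1/n} ≤ 3 e^{2β} N(L, tK)^{1/n}`,
and the theorem follows by symmetry.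
-/

open Metric Module
open scoped NNReal ENNReal

section Volumetric

variable {E : Type*} [NormedAddCommGroup E] [NormedSpace ℝ E] [FiniteDimensional ℝ E]

lemma card_le_of_isSeparated_subset_closedBall {t : ℝ≥0} (ht : 0 < t) {S : Finset E}
    (hS : (S : Set E) ⊆ closedBall 0 1) (hsep : IsSeparated t (S : Set E)) :
    (S.card : ℝ) ≤ (1 + 2 / t) ^ finrank ℝ E := by
  borelize E
  obtain ⟨μ, _⟩ : ∃ μ : Measure E, μ.IsAddHaarMeasure := ⟨.addHaar, inferInstance⟩
  set r : ℝ := t / 2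
  have hr : 0 < r := by positivity
  have hdisj : (S : Set E).PairwiseDisjoint (closedBall · r) := fun x hx y hy hxy =>
    closedBall_disjoint_closedBall <| by
      have : (t : ℝ≥0∞) < edist x y := hsep hx hy hxy
      rw [edist_nndist, ENNReal.coe_lt_coe, ← NNReal.coe_lt_coe, coe_nndist] at this
      linarith [show r + r = t from add_halves _]
  have hunion : (⋃ s ∈ S, closedBall s r) ⊆ closedBall 0 (1 + r) := by
    refine Set.iUnion₂_subset fun s hs x hx => ?_
    rw [mem_closedBall] at hx ⊢
    linarith [dist_triangle x s 0, mem_closedBall.mp (hS hs)]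
  have hV : 0 < μ.real (closedBall 0 1) :=
    ENNReal.toReal_pos (measure_closedBall_pos μ 0 one_pos).ne' measure_closedBall_lt_top.ne
  have hvol : (S.card : ℝ) * (r ^ finrank ℝ E * μ.real (closedBall 0 1)) ≤
      (1 + r) ^ finrank ℝ E * μ.real (closedBall 0 1) := by
    calc (S.card : ℝ) * (r ^ finrank ℝ E * μ.real (closedBall 0 1))
        = ∑ s ∈ S, μ.real (closedBall s r) := by
          simp [Measure.addHaar_real_closedBall' μ _ hr.le]
      _ = μ.real (⋃ s ∈ S, closedBall s r) :=
          (measureReal_biUnion_finset hdisj (fun _ _ => measurableSet_closedBall)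
            (fun _ _ => measure_closedBall_lt_top.ne)).symm
      _ ≤ μ.real (closedBall 0 (1 + r)) := measureReal_mono hunion measure_closedBall_lt_top.ne
      _ = (1 + r) ^ finrank ℝ E * μ.real (closedBall 0 1) :=
          Measure.addHaar_real_closedBall' μ _ (by positivity)
  have hfactor : 1 + r = (1 + 2 / t) * r := by simp only [r]; field_simp; ring
  rwa [← mul_assoc, mul_le_mul_iff_left₀ hV, hfactor, mul_pow,
    mul_le_mul_iff_left₀ (by positivity)] at hvol

lemma packingNumber_closedBall_ne_top {t : ℝ≥0} (ht : 0 < t) :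
    packingNumber t (closedBall (0 : E) 1) ≠ ⊤ := by
  set N := ⌊((1 : ℝ) + 2 / t) ^ finrank ℝ E⌋₊
  refine ne_top_of_le_ne_top (ENat.natCast_ne_top N) <|
    iSup₂_le fun C hC => iSup_le fun hsep => ?_
  by_contra! hlt
  obtain ⟨D, hDC, hD⟩ := Set.exists_subset_encard_eq (Order.add_one_le_of_lt hlt)
  have hDfin : D.Finite := Set.finite_of_encard_eq_coe (k := N + 1) hD
  have hcard := card_le_of_isSeparated_subset_closedBall ht (S := hDfin.toFinset)
    (by simpa using hDC.trans hC) (by simpa using hsep.subset hDC)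
  rw [hDfin.encard_eq_coe_toFinset_card] at hD
  norm_cast at hD
  rw [hD] at hcard
  push_cast at hcard
  exact absurd hcard (not_le.mpr (Nat.lt_floor_add_one _))

lemma exists_finset_card_le_subset_iUnion_closedBall {t : ℝ≥0} (ht : 0 < t) :
    ∃ F : Finset E, (F.card : ℝ) ≤ (1 + 2 / t) ^ finrank ℝ E ∧
      closedBall 0 1 ⊆ ⋃ c ∈ F, closedBall c t := by
  have hfin := packingNumber_closedBall_ne_top (E := E) ht
  have hC : (maximalSeparatedSet t (closedBall (0 : E) 1)).Finite := by
    rw [← Set.encard_ne_top_iff, encard_maximalSeparatedSet hfin]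
    exact hfin
  refine ⟨hC.toFinset, card_le_of_isSeparated_subset_closedBall ht ?_ ?_, ?_⟩
  · simpa using maximalSeparatedSet_subset
  · simpa using isSeparated_maximalSeparatedSet
  · simpa [← isCover_iff_subset_iUnion_closedBall] using isCover_maximalSeparatedSet hfin

end Volumetric

section CoveringNumber

variable {n : ℕ} {A B C : Set (EuclideanSpace ℝ (Fin n))}

lemma covN_le_card {F : Finset (EuclideanSpace ℝ (Fin n))} (h : A ⊆ ⋃ c ∈ F, c +ᵥ B) :
    covN A B ≤ F.card :=
  Nat.sInf_le ⟨F, rfl, h⟩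

lemma exists_finset_card_eq_covN (hA : IsCompact A) (hB : (interior B).Nonempty) :
    ∃ F : Finset (EuclideanSpace ℝ (Fin n)), F.card = covN A B ∧ A ⊆ ⋃ c ∈ F, c +ᵥ B := by
  classical
  obtain ⟨F, hF⟩ := compact_covered_by_add_left_translates hA hB
  have hcover : A ⊆ ⋃ c ∈ F.image Neg.neg, c +ᵥ B := by
    refine hF.trans <| iUnion₂_subset fun g hg x hx =>
      mem_biUnion (Finset.mem_image_of_mem _ hg) ?_
    rwa [mem_vadd_set_iff_neg_vadd_mem, neg_neg]
  exact Nat.sInf_mem (s := {N | ∃ F : Finset (EuclideanSpace ℝ (Fin n)),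
    F.card = N ∧ A ⊆ ⋃ c ∈ F, c +ᵥ B}) ⟨_, _, rfl, hcover⟩

lemma exists_finset_card_le_mul_subset_iUnion_vadd {F G : Finset (EuclideanSpace ℝ (Fin n))}
    (hF : A ⊆ ⋃ c ∈ F, c +ᵥ B) (hG : B ⊆ ⋃ d ∈ G, d +ᵥ C) :
    ∃ H : Finset (EuclideanSpace ℝ (Fin n)), H.card ≤ F.card * G.card ∧
      A ⊆ ⋃ e ∈ H, e +ᵥ C := by
  classical
  refine ⟨(F ×ˢ G).image fun p => p.1 + p.2, Finset.card_image_le.trans_eq (F.card_product G),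
    fun a ha => ?_⟩
  obtain ⟨c, hc, b, hb, rfl⟩ : ∃ c ∈ F, ∃ b ∈ B, c + b = a := by simpa [mem_vadd_set] using hF ha
  obtain ⟨d, hd, e, he, rfl⟩ : ∃ d ∈ G, ∃ e ∈ C, d + e = b := by simpa [mem_vadd_set] using hG hb
  refine mem_biUnion (Finset.mem_image_of_mem (fun p => p.1 + p.2)
    ((Finset.mem_product (p := (c, d))).mpr ⟨hc, hd⟩)) ?_
  exact ⟨e, he, by simp [add_assoc]⟩

lemma covN_le_covN_mul_covN (hA : IsCompact A) (hB : IsCompact B) (hBi : (interior B).Nonempty)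
    (hCi : (interior C).Nonempty) : covN A C ≤ covN A B * covN B C := by
  obtain ⟨F, hFcard, hF⟩ := exists_finset_card_eq_covN hA hBi
  obtain ⟨G, hGcard, hG⟩ := exists_finset_card_eq_covN hB hCi
  obtain ⟨H, hHcard, hH⟩ := exists_finset_card_le_mul_subset_iUnion_vadd hF hG
  rw [← hFcard, ← hGcard]
  exact (covN_le_card hH).trans hHcard

lemma covN_smul_smul_le (hA : IsCompact A) (hB : (interior B).Nonempty) (t : ℝ) :
    covN (t • A) (t • B) ≤ covN A B := by
  classical
  obtain ⟨F, hFcard, hF⟩ := exists_finset_card_eq_covN hA hB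
  refine hFcard ▸ (covN_le_card (F := F.image (t • ·)) ?_).trans Finset.card_image_le
  rintro _ ⟨a, ha, rfl⟩
  obtain ⟨c, hc, b, hb, rfl⟩ : ∃ c ∈ F, ∃ b ∈ B, c + b = a := by simpa [mem_vadd_set] using hF ha
  exact mem_biUnion (Finset.mem_image_of_mem _ hc) ⟨t • b, smul_mem_smul_set hb, by simp [smul_add]⟩

lemma one_le_covN (hA : IsCompact A) (hAne : A.Nonempty) (hB : (interior B).Nonempty) :
    1 ≤ covN A B := by
  obtain ⟨F, hFcard, hF⟩ := exists_finset_card_eq_covN hA hB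
  obtain ⟨a, ha⟩ := hAne
  obtain ⟨c, hc, -⟩ := mem_iUnion₂.mp (hF ha)
  exact hFcard ▸ Finset.card_pos.mpr ⟨c, hc⟩

lemma volume_le_covN_mul (hA : IsCompact A) (hB : (interior B).Nonempty) :
    volume A ≤ covN A B * volume B := by
  obtain ⟨F, hFcard, hF⟩ := exists_finset_card_eq_covN hA hB
  calc volume A ≤ ∑ c ∈ F, volume (c +ᵥ B) := (measure_mono hF).trans (measure_biUnion_finset_le F _)
    _ = covN A B * volume B := by simp [measure_vadd, hFcard]

end CoveringNumber

section MPosition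

variable {n : ℕ} {β t : ℝ} {K L : Set (EuclideanSpace ℝ (Fin n))}

lemma covN_unitClosedBall_smul_le (ht : 0 < t) :
    (covN (closedBall (0 : EuclideanSpace ℝ (Fin n)) 1) (t • closedBall 0 1) : ℝ) ≤
      (1 + 2 / t) ^ n := by
  lift t to ℝ≥0 using ht.le
  obtain ⟨F, hFcard, hF⟩ :=
    exists_finset_card_le_subset_iUnion_closedBall (E := EuclideanSpace ℝ (Fin n)) ht
  rw [finrank_euclideanSpace_fin] at hFcard
  refine le_trans (Nat.cast_le.mpr (covN_le_card ?_)) hFcard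
  simpa [smul_unitClosedBall, vadd_closedBall] using hF

lemma MPosition.covN_smul_le (hK : MPosition β K) (hL : MPosition β L) (hKc : IsCompact K)
    (hLi : (interior L).Nonempty) (ht : 0 < t) :
    (covN K (t • L) : ℝ) ≤ (Real.exp (2 * β) * (1 + 2 / t)) ^ n := by
  set B := closedBall (0 : EuclideanSpace ℝ (Fin n)) 1
  have hBc : IsCompact B := isCompact_closedBall 0 1
  have hBi : (interior B).Nonempty := ⟨0, by simp [B, interior_closedBall]⟩
  have hsmul {A : Set (EuclideanSpace ℝ (Fin n))} (hA : (interior A).Nonempty) :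
      (interior (t • A)).Nonempty := by
    rw [interior_smul₀ ht.ne']
    exact hA.smul_set
  have hchain : covN K (t • L) ≤ covN K B * covN B (t • B) * covN B L :=
    calc covN K (t • L) ≤ covN K (t • B) * covN (t • B) (t • L) :=
          covN_le_covN_mul_covN hKc (hBc.smul t) (hsmul hBi) (hsmul hLi)
      _ ≤ covN K B * covN B (t • B) * covN B L :=
          Nat.mul_le_mul (covN_le_covN_mul_covN hKc hBc hBi (hsmul hBi))
            (covN_smul_smul_le hBc hLi t)
  calc (covN K (t • L) : ℝ) ≤ covN K B * covN B (t • B) * covN B L := by exact_mod_cast hchain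
    _ ≤ Real.exp (β * n) * (1 + 2 / t) ^ n * Real.exp (β * n) := by
        gcongr
        exacts [hK.2.1, covN_unitClosedBall_smul_le ht, hL.2.2.1]
    _ = (Real.exp (2 * β) * (1 + 2 / t)) ^ n := by
        rw [mul_pow, mul_right_comm, ← Real.exp_add, ← Real.exp_nat_mul]
        ring_nf

lemma inv_pow_le_covN_smul {A B : Set (EuclideanSpace ℝ (Fin n))} (hA : IsCompact A)
    (hAi : (interior A).Nonempty) (hBi : (interior B).Nonempty) (hvol : volume B = volume A)
    (ht : 0 < t) : t⁻¹ ^ n ≤ covN A (t • B) := by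
  have hA₀ : volume A ≠ 0 := (Measure.measure_pos_of_nonempty_interior _ hAi).ne'
  have hvol_le : 1 * volume A ≤ (covN A (t • B) * ENNReal.ofReal (t ^ n)) * volume A := by
    have htB : (interior (t • B)).Nonempty := by
      rw [interior_smul₀ ht.ne']
      exact hBi.smul_set
    simpa [Measure.addHaar_smul, hvol, abs_of_pos (pow_pos ht n), mul_assoc]
      using volume_le_covN_mul hA htB
  rw [ENNReal.mul_le_mul_iff_left hA₀ hA.measure_lt_top.ne, ← ENNReal.ofReal_natCast,
    ← ENNReal.ofReal_mul (Nat.cast_nonneg _), ENNReal.one_le_ofReal] at hvol_le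
  rw [inv_pow, inv_le_iff_one_le_mul₀ (pow_pos ht n)]
  linarith

lemma MPosition.covN_rpow_le (hK : MPosition β K) (hL : MPosition β L) (hKc : IsCompact K)
    (hKi : (interior K).Nonempty) (hLc : IsCompact L) (hLi : (interior L).Nonempty)
    (hvol : volume K = volume L) (hn : 0 < n) (ht : 0 < t) :
    (covN K (t • L) : ℝ) ^ ((1 : ℝ) / n) ≤
      3 * Real.exp (2 * β) * (covN L (t • K) : ℝ) ^ ((1 : ℝ) / n) := by
  have hn' : (0 : ℝ) < n := Nat.cast_pos.mpr hn
  have hupper : (covN K (t • L) : ℝ) ^ ((1 : ℝ) / n) ≤ Real.exp (2 * β) * (1 + 2 / t) := by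
    rw [one_div, Real.rpow_inv_le_iff_of_pos (Nat.cast_nonneg _) (by positivity) hn',
      Real.rpow_natCast]
    exact hK.covN_smul_le hL hKc hLi ht
  have hM_one : 1 ≤ (covN L (t • K) : ℝ) ^ ((1 : ℝ) / n) := by
    rw [one_div, Real.le_rpow_inv_iff_of_pos zero_le_one (Nat.cast_nonneg _) hn', Real.one_rpow]
    exact_mod_cast one_le_covN hLc (hLi.mono interior_subset)
      (by rw [interior_smul₀ ht.ne']; exact hKi.smul_set)
  have hM_inv : t⁻¹ ≤ (covN L (t • K) : ℝ) ^ ((1 : ℝ) / n) := by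
    rw [one_div, Real.le_rpow_inv_iff_of_pos (by positivity) (Nat.cast_nonneg _) hn',
      Real.rpow_natCast]
    exact inv_pow_le_covN_smul hLc hLi hKi hvol ht
  have hcompare : 1 + 2 / t ≤ 3 * (covN L (t • K) : ℝ) ^ ((1 : ℝ) / n) := by
    rw [div_eq_mul_inv]
    rcases le_total 1 t⁻¹ with h | h <;> linarith
  calc (covN K (t • L) : ℝ) ^ ((1 : ℝ) / n) ≤ Real.exp (2 * β) * (1 + 2 / t) := hupper
    _ ≤ Real.exp (2 * β) * (3 * (covN L (t • K) : ℝ) ^ ((1 : ℝ) / n)) := by gcongr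
    _ = 3 * Real.exp (2 * β) * (covN L (t • K) : ℝ) ^ ((1 : ℝ) / n) := by ring

end MPosition

theorem statement19_general (β : ℝ) :
    ∃ c₁ c₂ : ℝ, 0 < c₁ ∧ 0 < c₂ ∧
      ∀ (n : ℕ), 0 < n → ∀ K L : Set (EuclideanSpace ℝ (Fin n)),
        Convex ℝ K → IsCompact K → (interior K).Nonempty →
        Convex ℝ L → IsCompact L → (interior L).Nonempty →
        volume K = volume L → MPosition β K → MPosition β L →
        ∀ t : ℝ, 0 < t →
          c₁ * (covN L (t • K) : ℝ) ^ ((1 : ℝ) / n) ≤ (covN K (t • L) : ℝ) ^ ((1 : ℝ) / n) ∧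
          (covN K (t • L) : ℝ) ^ ((1 : ℝ) / n) ≤ c₂ * (covN L (t • K) : ℝ) ^ ((1 : ℝ) / n) := by
  refine ⟨(3 * Real.exp (2 * β))⁻¹, 3 * Real.exp (2 * β), by positivity, by positivity,
    fun n hn K L _ hKc hKi _ hLc hLi hvol hK hL t ht =>
      ⟨?_, hK.covN_rpow_le hL hKc hKi hLc hLi hvol hn ht⟩⟩
  rw [inv_mul_le_iff₀ (by positivity)]
  exact hL.covN_rpow_le hK hLc hLi hKc hKi hvol.symm hn ht

/-- If `K` and `L` are convex bodies in ℝⁿ of the same volume, both in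
`M`-position with constant `β`, then `N(K, tL)^{1/n} ≍ N(L, tK)^{1/n}` for every `t > 0`,
up to constants depending only on `β`. -/
theorem statement19 (β : ℝ) (hβ : 0 < β) :
    ∃ c₁ c₂ : ℝ, 0 < c₁ ∧ 0 < c₂ ∧
      ∀ (n : ℕ), 0 < n → ∀ K L : Set (EuclideanSpace ℝ (Fin n)),
        Convex ℝ K → IsCompact K → (interior K).Nonempty →
        Convex ℝ L → IsCompact L → (interior L).Nonempty →
        volume K = volume L → MPosition β K → MPosition β L →
        ∀ t : ℝ, 0 < t →
          c₁ * (covN L (t • K) : ℝ) ^ ((1 : ℝ) / n) ≤ (covN K (t • L) : ℝ) ^ ((1 : ℝ) / n) ∧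
          (covN K (t • L) : ℝ) ^ ((1 : ℝ) / n) ≤ c₂ * (covN L (t • K) : ℝ) ^ ((1 : ℝ) / n) :=
  statement19_general β
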